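/- Let c ≥ 0 and define F_c(y) = 1 + y^2/4 + y^4/64 + y^6/256 + c y^8 and N(y) = ∑_{j=0}^∞ binom(1/2,j)^2 y^{2j}. The function y ↦ F_c(y)/N(y) is increasing on [0,1] if and only if c ≥ 5/768. -/

import Mathlib

/-- The generalized binomial coefficient `r(r-1)⋯(r-j+1)/j!`. -/
noncomputable def gbinom (r : ℝ) (j : ℕ) : ℝ :=
  (∏ k ∈ Finset.range j, (r - k)) / (Nat.factorial j)

/-- `F_c(y) = 1 + y²/4 + y⁴/64 + y⁶/256 + c y⁸`. -/
noncomputable def Fc (c y : ℝ) : ℝ :=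
  1 + y ^ 2 / 4 + y ^ 4 / 64 + y ^ 6 / 256 + c * y ^ 8

/-- `N(y) = ∑_{j≥0} binom(1/2,j)² y^{2j}`, the `H¹(𝕋²)` norm of `z₁ + y z₂`. -/
noncomputable def N (y : ℝ) : ℝ := ∑' j : ℕ, gbinom (1/2) j ^ 2 * y ^ (2 * j)

/-!
Substitute `x = y²`: then `N y = Nx x` with `Nx x = ∑ aⱼ xʲ`, `aⱼ = binom(1/2, j)²`, and
`Fc c y = f c x`. On `(0, 1)` the derivative of `f c / Nx` has the sign of
`numer c x = x f' Nx - f · x Nx'`. The recursion `(j + 1)² aⱼ₊₁ = (j - 1/2)² aⱼ` gives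
`aⱼ = O(j⁻³)` and, by telescoping, `∑ j aⱼ = Nx 1 / 4`; so `numer c` is continuous on `[0, 1]`
with `numer c 1 = 15/4 · Nx 1 · (c - 5/768)`, and monotonicity forces `c ≥ 5/768`.
Conversely `numer (5/768)` is a power series whose coefficients are `≥ 0` up to degree 5,
`≤ 0` afterwards, and sum to `numer (5/768) 1 = 0`, so it is `≥ 0` on `[0, 1]`; and
`numer c - numer (5/768) = (c - 5/768) x⁴ (4 Nx - x Nx')`, which is `≥ 0` by the same
sign-change argument.
-/

open Finset Filter Topology

section PowerSeries

variable {v : ℕ → ℝ} {x : ℝ}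

lemma summable_norm_mul_pow (hv : Summable fun j => ‖v j‖) (hx : |x| ≤ 1) :
    Summable fun j => ‖v j * x ^ j‖ := by
  refine hv.of_nonneg_of_le (fun j => norm_nonneg _) fun j => ?_
  rw [norm_mul, norm_pow, Real.norm_eq_abs x]
  exact mul_le_of_le_one_right (abs_nonneg _) (pow_le_one₀ (abs_nonneg x) hx)

lemma continuousOn_tsum_mul_pow (hv : Summable fun j => ‖v j‖) :
    ContinuousOn (fun x => ∑' j, v j * x ^ j) (Set.Icc (-1) 1) := by
  refine continuousOn_tsum (fun j => by fun_prop) hv fun j x hx => ?_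
  rw [norm_mul, norm_pow, Real.norm_eq_abs x]
  exact mul_le_of_le_one_right (abs_nonneg _) (pow_le_one₀ (abs_nonneg x) (abs_le.2 hx))

lemma hasDerivAt_tsum_mul_pow (hv : Summable fun j : ℕ => ‖(j : ℝ) * v j‖)
    (hx : x ∈ Set.Ioo (-1) 1) (hx0 : x ≠ 0) :
    HasDerivAt (fun x => ∑' j, v j * x ^ j) ((∑' j : ℕ, (j : ℝ) * v j * x ^ j) / x) x := by
  have hderiv := hasDerivAt_tsum_of_isPreconnected (g := fun j x => v j * x ^ j)
    (g' := fun j x => v j * (j * x ^ (j - 1))) hv isOpen_Ioo isPreconnected_Ioo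
    (fun j x _ => (hasDerivAt_pow j x).const_mul (v j)) (fun j x hx => ?_)
    (show (0 : ℝ) ∈ Set.Ioo (-1) 1 by norm_num) ?_ hx
  · refine hderiv.congr_deriv ?_
    rw [eq_div_iff hx0, ← tsum_mul_right]
    congr 1 with (_ | j)
    · simp
    · simp only [Nat.add_sub_cancel, pow_succ]
      ring
  · rw [norm_mul, norm_mul, norm_pow, Real.norm_eq_abs x, mul_left_comm, ← mul_assoc, ← norm_mul]
    exact mul_le_of_le_one_right (norm_nonneg ((j : ℝ) * v j))
      (pow_le_one₀ (abs_nonneg x) (abs_le.2 ⟨hx.1.le, hx.2.le⟩))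
  · exact summable_of_ne_finset_zero (s := {0}) fun j hj => by simp_all

lemma hasSum_sum_antidiagonal_mul_pow {u : ℕ → ℝ}
    (hu : Summable fun k => ‖u k * x ^ k‖) (hv : Summable fun j => ‖v j * x ^ j‖) :
    HasSum (fun m => (∑ p ∈ antidiagonal m, u p.1 * v p.2) * x ^ m)
      ((∑' k, u k * x ^ k) * ∑' j, v j * x ^ j) := by
  rw [tsum_mul_tsum_eq_tsum_sum_antidiagonal_of_summable_norm hu hv]
  refine (summable_norm_sum_mul_antidiagonal_of_summable_norm hu hv).of_norm.hasSum.congr_fun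
    fun m => ?_
  rw [sum_mul]
  refine sum_congr rfl fun p hp => ?_
  rw [← mem_antidiagonal.1 hp, pow_add]
  ring

/-- Each term `b m * x ^ m` dominates `b m * x ^ K`. -/
lemma HasSum.nonneg_of_signChange {b : ℕ → ℝ} {s t : ℝ} (K : ℕ) (hb : HasSum b s) (hs : 0 ≤ s)
    (hpos : ∀ m < K, 0 ≤ b m) (hneg : ∀ m, K ≤ m → b m ≤ 0) (hx0 : 0 ≤ x) (hx1 : x ≤ 1)
    (hbx : HasSum (fun m => b m * x ^ m) t) : 0 ≤ t := by
  refine (mul_nonneg (pow_nonneg hx0 K) hs).trans (hasSum_le (fun m => ?_) (hb.mul_left _) hbx)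
  rcases lt_or_ge m K with hm | hm
  · rw [mul_comm]
    exact mul_le_mul_of_nonneg_left (pow_le_pow_of_le_one hx0 hx1 hm.le) (hpos m hm)
  · rw [mul_comm]
    exact mul_le_mul_of_nonpos_left (pow_le_pow_of_le_one hx0 hx1 hm) (hneg m hm)

end PowerSeries

lemma monotoneOn_Icc_comp_sq_iff {g : ℝ → ℝ} :
    MonotoneOn (fun y => g (y ^ 2)) (Set.Icc 0 1) ↔ MonotoneOn g (Set.Icc 0 1) := by
  constructor
  · intro h x hx x' hx' hxx'
    have hsq : ∀ {z : ℝ}, z ∈ Set.Icc (0 : ℝ) 1 → √z ∈ Set.Icc (0 : ℝ) 1 := fun hz =>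
      ⟨Real.sqrt_nonneg _, Real.sqrt_le_one.2 hz.2⟩
    simpa only [Real.sq_sqrt hx.1, Real.sq_sqrt hx'.1] using
      h (hsq hx) (hsq hx') (Real.sqrt_le_sqrt hxx')
  · intro h y hy y' hy' hyy'
    have hsq : ∀ {z : ℝ}, z ∈ Set.Icc (0 : ℝ) 1 → z ^ 2 ∈ Set.Icc (0 : ℝ) 1 := fun hz =>
      ⟨sq_nonneg _, pow_le_one₀ hz.1 hz.2⟩
    exact h (hsq hy) (hsq hy') (pow_le_pow_left₀ hy.1 hyy' 2)

lemma gbinom_succ (r : ℝ) (j : ℕ) : gbinom r (j + 1) = gbinom r j * (r - j) / (j + 1) := by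
  simp only [gbinom, prod_range_succ, Nat.factorial_succ, Nat.cast_mul, Nat.cast_succ]
  field_simp

namespace FcRatio

noncomputable def coef (j : ℕ) : ℝ := gbinom (1/2) j ^ 2

lemma coef_nonneg (j : ℕ) : 0 ≤ coef j := sq_nonneg _

lemma coef_zero : coef 0 = 1 := by simp [coef, gbinom]

lemma succ_sq_mul_coef_succ (j : ℕ) :
    ((j : ℝ) + 1) ^ 2 * coef (j + 1) = ((j : ℝ) - 1/2) ^ 2 * coef j := by
  rw [coef, coef, gbinom_succ]
  field_simp
  ring

lemma succ_cube_mul_coef_succ_le (j : ℕ) : ((j : ℝ) + 1) ^ 3 * coef (j + 1) ≤ 1/4 := by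
  induction j with
  | zero => norm_num [coef, gbinom]
  | succ j ih =>
    have hj : (0 : ℝ) ≤ j := j.cast_nonneg
    calc ((↑(j + 1) : ℝ) + 1) ^ 3 * coef (j + 1 + 1)
        = ((j : ℝ) + 2) * ((j : ℝ) + 1/2) ^ 2 * coef (j + 1) := by
          have := succ_sq_mul_coef_succ (j + 1)
          push_cast at this ⊢
          linear_combination ((j : ℝ) + 2) * this
      _ ≤ ((j : ℝ) + 1) ^ 3 * coef (j + 1) := by
          gcongr
          · exact coef_nonneg _
          · nlinarith
      _ ≤ 1/4 := ih

lemma summable_natCast_mul_coef : Summable fun j : ℕ => (j : ℝ) * coef j := by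
  rw [← summable_nat_add_iff 1]
  refine ((summable_nat_add_iff 1).2 (Real.summable_one_div_nat_pow.2 one_lt_two)).of_nonneg_of_le
    (fun j => mul_nonneg j.succ.cast_nonneg (coef_nonneg _)) fun j => ?_
  have := succ_cube_mul_coef_succ_le j
  push_cast
  rw [le_div_iff₀ (by positivity)]
  linarith

lemma summable_coef : Summable coef :=
  (summable_nat_add_iff 1).1 <|
    ((summable_nat_add_iff 1).2 summable_natCast_mul_coef).of_nonneg_of_le
      (fun j => coef_nonneg _) fun j => le_mul_of_one_le_left (coef_nonneg _) (by simp)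

/-- Telescoping: `(4j - 1) coef j = 4 j² coef j - 4 (j + 1)² coef (j + 1)`. -/
lemma sum_range_four_mul_sub_one_mul_coef (n : ℕ) :
    ∑ j ∈ range n, (4 * (j : ℝ) - 1) * coef j = -(4 * (n : ℝ) ^ 2 * coef n) := by
  induction n with
  | zero => simp
  | succ n ih =>
    rw [sum_range_succ, ih]
    push_cast
    linear_combination 4 * succ_sq_mul_coef_succ n

lemma tendsto_sq_mul_coef : Tendsto (fun n : ℕ => (n : ℝ) ^ 2 * coef n) atTop (𝓝 0) := by
  rw [← tendsto_add_atTop_iff_nat 1]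
  refine squeeze_zero (fun n => mul_nonneg (sq_nonneg _) (coef_nonneg _)) (fun n => ?_)
    (tendsto_one_div_add_atTop_nhds_zero_nat (𝕜 := ℝ))
  have := succ_cube_mul_coef_succ_le n
  push_cast
  rw [le_div_iff₀ (by positivity)]
  nlinarith [coef_nonneg (n + 1)]

lemma hasSum_natCast_mul_coef :
    HasSum (fun j : ℕ => (j : ℝ) * coef j) ((∑' j, coef j) / 4) := by
  have hzero : HasSum (fun j : ℕ => (4 * (j : ℝ) - 1) * coef j) 0 := by
    rw [((summable_natCast_mul_coef.mul_left 4).sub summable_coef).congr (fun j => by ring)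
      |>.hasSum_iff_tendsto_nat]
    simpa [sum_range_four_mul_sub_one_mul_coef, mul_assoc] using
      (tendsto_sq_mul_coef.const_mul 4).neg
  have h := (hzero.add summable_coef.hasSum).div_const 4
  rw [zero_add] at h
  exact h.congr_fun fun j => by ring

lemma summable_norm_coef : Summable fun j => ‖coef j‖ :=
  summable_coef.congr fun j => (Real.norm_of_nonneg (coef_nonneg j)).symm

lemma summable_norm_natCast_mul_coef : Summable fun j : ℕ => ‖(j : ℝ) * coef j‖ :=
  summable_natCast_mul_coef.congr fun j =>
    (Real.norm_of_nonneg (mul_nonneg j.cast_nonneg (coef_nonneg j))).symm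

noncomputable def Nx (x : ℝ) : ℝ := ∑' j, coef j * x ^ j

noncomputable def Mx (x : ℝ) : ℝ := ∑' j : ℕ, (j : ℝ) * coef j * x ^ j

noncomputable def f (c x : ℝ) : ℝ := 1 + x / 4 + x ^ 2 / 64 + x ^ 3 / 256 + c * x ^ 4

lemma N_eq_Nx (y : ℝ) : N y = Nx (y ^ 2) := by
  simp only [N, Nx, coef, pow_mul]

lemma Fc_eq_f (c y : ℝ) : Fc c y = f c (y ^ 2) := by
  simp only [Fc, f]
  ring

variable {x : ℝ}

lemma hasSum_Nx (hx : |x| ≤ 1) : HasSum (fun j => coef j * x ^ j) (Nx x) :=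
  (summable_norm_mul_pow summable_norm_coef hx).of_norm.hasSum

lemma hasSum_Mx (hx : |x| ≤ 1) : HasSum (fun j : ℕ => (j : ℝ) * coef j * x ^ j) (Mx x) :=
  (summable_norm_mul_pow summable_norm_natCast_mul_coef hx).of_norm.hasSum

lemma Mx_one : Mx 1 = Nx 1 / 4 := by
  simpa [Mx, Nx] using hasSum_natCast_mul_coef.tsum_eq

lemma one_le_Nx (hx0 : 0 ≤ x) (hx1 : x ≤ 1) : 1 ≤ Nx x := by
  simpa [coef_zero] using le_hasSum (hasSum_Nx (abs_le.2 ⟨by linarith, hx1⟩)) 0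
    fun j _ => mul_nonneg (coef_nonneg j) (pow_nonneg hx0 j)

lemma continuousOn_Nx : ContinuousOn Nx (Set.Icc 0 1) :=
  (continuousOn_tsum_mul_pow summable_norm_coef).mono (Set.Icc_subset_Icc (by norm_num) le_rfl)

lemma continuousOn_Mx : ContinuousOn Mx (Set.Icc 0 1) :=
  (continuousOn_tsum_mul_pow summable_norm_natCast_mul_coef).mono
    (Set.Icc_subset_Icc (by norm_num) le_rfl)

lemma hasDerivAt_Nx (hx : x ∈ Set.Ioo 0 1) : HasDerivAt Nx (Mx x / x) x :=
  hasDerivAt_tsum_mul_pow summable_norm_natCast_mul_coef ⟨by linarith [hx.1], hx.2⟩ hx.1.ne'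

noncomputable def numer (c x : ℝ) : ℝ :=
  (x / 4 + x ^ 2 / 32 + 3 * x ^ 3 / 256 + 4 * c * x ^ 4) * Nx x - f c x * Mx x

lemma hasDerivAt_f_div_Nx (c : ℝ) (hx : x ∈ Set.Ioo 0 1) :
    HasDerivAt (fun x => f c x / Nx x) (numer c x / (x * Nx x ^ 2)) x := by
  have hf : HasDerivAt (f c) (1 / 4 + x / 32 + 3 * x ^ 2 / 256 + 4 * c * x ^ 3) x := by
    have h := (((((hasDerivAt_id x).div_const 4).add ((hasDerivAt_pow 2 x).div_const 64)).add
      ((hasDerivAt_pow 3 x).div_const 256)).add ((hasDerivAt_pow 4 x).const_mul c)).const_add 1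
    refine (h.congr_deriv (by norm_num; ring)).congr_of_eventuallyEq
      (Eventually.of_forall fun y => ?_)
    simp only [f, id, Pi.add_apply]
    ring
  have hN : Nx x ≠ 0 := (zero_lt_one.trans_le (one_le_Nx hx.1.le hx.2.le)).ne'
  refine (hf.div (hasDerivAt_Nx hx) hN).congr_deriv ?_
  rw [numer]
  field_simp [hx.1.ne']

lemma continuousOn_numer (c : ℝ) : ContinuousOn (numer c) (Set.Icc 0 1) := by
  exact ((Continuous.continuousOn (by fun_prop)).mul continuousOn_Nx).sub
    ((Continuous.continuousOn (by unfold f; fun_prop)).mul continuousOn_Mx)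

lemma numer_one (c : ℝ) : numer c 1 = 15 / 4 * Nx 1 * (c - 5 / 768) := by
  rw [numer, f, Mx_one]
  ring

lemma monotoneOn_f_div_Nx_iff (c : ℝ) :
    MonotoneOn (fun x => f c x / Nx x) (Set.Icc 0 1) ↔
      ∀ x ∈ Set.Ioo (0 : ℝ) 1, 0 ≤ numer c x := by
  have hpos : ∀ x ∈ Set.Ioo (0 : ℝ) 1, 0 < x * Nx x ^ 2 := fun x hx =>
    mul_pos hx.1 (pow_pos (zero_lt_one.trans_le (one_le_Nx hx.1.le hx.2.le)) 2)
  constructor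
  · intro hmono x hx
    have hderiv := hasDerivAt_f_div_Nx c hx
    have h := hmono.derivWithin_nonneg (x := x)
    rw [derivWithin_of_mem_nhds (Icc_mem_nhds hx.1 hx.2), hderiv.deriv] at h
    simpa using (le_div_iff₀ (hpos x hx)).1 h
  · intro hnumer
    rw [← interior_Icc] at hpos hnumer
    have hderiv : ∀ x ∈ interior (Set.Icc (0 : ℝ) 1),
        HasDerivAt (fun x => f c x / Nx x) (numer c x / (x * Nx x ^ 2)) x := by
      rw [interior_Icc]
      exact fun x hx => hasDerivAt_f_div_Nx c hx
    refine monotoneOn_of_deriv_nonneg (convex_Icc 0 1) ?_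
      (fun x hx => (hderiv x hx).differentiableAt.differentiableWithinAt) fun x hx => ?_
    · exact (Continuous.continuousOn (by unfold f; fun_prop)).div continuousOn_Nx
        fun x hx => (zero_lt_one.trans_le (one_le_Nx hx.1 hx.2)).ne'
    · rw [(hderiv x hx).deriv]
      exact div_nonneg (hnumer x hx) (hpos x hx).le

lemma numer_eq_add (c x : ℝ) :
    numer c x = numer (5 / 768) x + (c - 5 / 768) * x ^ 4 * (4 * Nx x - Mx x) := by
  simp only [numer, f]
  ring

lemma four_mul_Nx_sub_Mx_nonneg (hx0 : 0 ≤ x) (hx1 : x ≤ 1) : 0 ≤ 4 * Nx x - Mx x := by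
  have hsum : ∀ {x : ℝ}, |x| ≤ 1 →
      HasSum (fun j : ℕ => (4 - (j : ℝ)) * coef j * x ^ j) (4 * Nx x - Mx x) := fun hx =>
    (((hasSum_Nx hx).mul_left 4).sub (hasSum_Mx hx)).congr_fun fun j => by ring
  refine HasSum.nonneg_of_signChange 5 (by simpa using hsum (x := 1) (by norm_num)) ?_
    (fun j hj => mul_nonneg (sub_nonneg.2 (mod_cast Nat.le_of_lt_succ hj)) (coef_nonneg j))
    (fun j hj => mul_nonpos_of_nonpos_of_nonneg (sub_nonpos.2 (mod_cast Nat.le_of_succ_le hj))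
      (coef_nonneg j))
    hx0 hx1 (hsum (abs_le.2 ⟨by linarith, hx1⟩))
  rw [Mx_one]
  linarith [one_le_Nx (x := 1) zero_le_one le_rfl]

noncomputable def critPolyCoeff : ℕ → ℝ
  | 0 => 1
  | 1 => 1 / 4
  | 2 => 1 / 64
  | 3 => 1 / 256
  | 4 => 5 / 768
  | _ => 0

lemma critPolyCoeff_eq_zero {k : ℕ} (hk : 5 ≤ k) : critPolyCoeff k = 0 := by
  obtain ⟨k, rfl⟩ := Nat.exists_eq_add_of_le' hk
  rfl

lemma critPolyCoeff_nonneg (k : ℕ) : 0 ≤ critPolyCoeff k := by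
  unfold critPolyCoeff
  split <;> norm_num

noncomputable def critCoeff (m : ℕ) : ℝ :=
  ∑ p ∈ antidiagonal m, ((p.1 : ℝ) - p.2) * critPolyCoeff p.1 * coef p.2

lemma hasSum_critCoeff_mul_pow (hx : |x| ≤ 1) :
    HasSum (fun m => critCoeff m * x ^ m) (numer (5 / 768) x) := by
  have hfin : ∀ u : ℕ → ℝ, (∀ k, 5 ≤ k → u k = 0) → ∀ k ∉ range 5, u k * x ^ k = 0 :=
    fun u hu k hk => by rw [hu k (by simpa using hk), zero_mul]
  have hpoly : ∀ u : ℕ → ℝ, (∀ k, 5 ≤ k → u k = 0) → Summable fun k => ‖u k * x ^ k‖ :=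
    fun u hu => summable_of_ne_finset_zero fun k hk => by rw [hfin u hu k hk, norm_zero]
  have hu₁ : ∀ k : ℕ, 5 ≤ k → (k : ℝ) * critPolyCoeff k = 0 := fun k hk => by
    rw [critPolyCoeff_eq_zero hk, mul_zero]
  have h₁ := hasSum_sum_antidiagonal_mul_pow (hpoly _ hu₁)
    (summable_norm_mul_pow summable_norm_coef hx)
  have h₂ := hasSum_sum_antidiagonal_mul_pow (hpoly _ (fun _ => critPolyCoeff_eq_zero))
    (summable_norm_mul_pow summable_norm_natCast_mul_coef hx)
  rw [tsum_eq_sum (hfin _ hu₁)] at h₁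
  rw [tsum_eq_sum (hfin _ (fun _ => critPolyCoeff_eq_zero))] at h₂
  have hval : numer (5 / 768) x = (∑ k ∈ range 5, (k : ℝ) * critPolyCoeff k * x ^ k) * Nx x
      - (∑ k ∈ range 5, critPolyCoeff k * x ^ k) * Mx x := by
    simp only [numer, f, sum_range_succ, critPolyCoeff]
    ring
  rw [hval]
  refine (h₁.sub h₂).congr_fun fun m => ?_
  rw [critCoeff, ← sub_mul, ← sum_sub_distrib]
  congr 1
  refine sum_congr rfl fun p _ => ?_
  ring

lemma critCoeff_nonneg_of_lt {m : ℕ} (hm : m < 6) : 0 ≤ critCoeff m := by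
  interval_cases m <;>
    norm_num [critCoeff, Nat.sum_antidiagonal_eq_sum_range_succ_mk, sum_range_succ,
      critPolyCoeff, coef, gbinom, prod_range_succ, Nat.factorial]

lemma critCoeff_nonpos_of_le {m : ℕ} (hm : 6 ≤ m) : critCoeff m ≤ 0 := by
  rcases lt_or_ge m 8 with hm' | hm'
  · interval_cases m <;>
      norm_num [critCoeff, Nat.sum_antidiagonal_eq_sum_range_succ_mk, sum_range_succ,
        critPolyCoeff, coef, gbinom, prod_range_succ, Nat.factorial]
  · refine sum_nonpos fun p hp => ?_
    rcases lt_or_ge p.1 5 with hk | hk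
    · have hkj : (p.1 : ℝ) ≤ p.2 := by
        have := mem_antidiagonal.1 hp
        exact_mod_cast (by omega : p.1 ≤ p.2)
      exact mul_nonpos_of_nonpos_of_nonneg
        (mul_nonpos_of_nonpos_of_nonneg (sub_nonpos.2 hkj) (critPolyCoeff_nonneg _))
        (coef_nonneg _)
    · rw [critPolyCoeff_eq_zero hk, mul_zero, zero_mul]

lemma numer_critical_nonneg (hx0 : 0 ≤ x) (hx1 : x ≤ 1) : 0 ≤ numer (5 / 768) x := by
  have hsum : HasSum critCoeff 0 := by
    simpa [numer_one] using hasSum_critCoeff_mul_pow (x := 1) (by norm_num)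
  exact hsum.nonneg_of_signChange 6 le_rfl (fun m => critCoeff_nonneg_of_lt)
    (fun m => critCoeff_nonpos_of_le) hx0 hx1
    (hasSum_critCoeff_mul_pow (abs_le.2 ⟨by linarith, hx1⟩))

lemma numer_nonneg {c : ℝ} (hc : 5 / 768 ≤ c) (hx0 : 0 ≤ x) (hx1 : x ≤ 1) : 0 ≤ numer c x := by
  rw [numer_eq_add]
  exact add_nonneg (numer_critical_nonneg hx0 hx1)
    (mul_nonneg (mul_nonneg (sub_nonneg.2 hc) (pow_nonneg hx0 4))
      (four_mul_Nx_sub_Mx_nonneg hx0 hx1))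

lemma le_of_forall_numer_nonneg {c : ℝ} (h : ∀ x ∈ Set.Ioo (0 : ℝ) 1, 0 ≤ numer c x) :
    5 / 768 ≤ c := by
  have h₁ : 0 ≤ numer c 1 :=
    ContinuousWithinAt.closure_le (by simp [closure_Ioo]) continuousWithinAt_const
      ((continuousOn_numer c 1 (by simp)).mono Set.Ioo_subset_Icc_self) h
  rw [numer_one] at h₁
  nlinarith [one_le_Nx (x := 1) zero_le_one le_rfl]

end FcRatio

theorem stmt10_general (c : ℝ) :
    MonotoneOn (fun y => Fc c y / N y) (Set.Icc (0:ℝ) 1) ↔ 5/768 ≤ c := by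
  simp only [FcRatio.Fc_eq_f, FcRatio.N_eq_Nx]
  rw [monotoneOn_Icc_comp_sq_iff (g := fun x => FcRatio.f c x / FcRatio.Nx x),
    FcRatio.monotoneOn_f_div_Nx_iff]
  exact ⟨FcRatio.le_of_forall_numer_nonneg, fun hc x hx => FcRatio.numer_nonneg hc hx.1.le hx.2.le⟩

theorem stmt10 (c : ℝ) (hc : 0 ≤ c) :
    MonotoneOn (fun y => Fc c y / N y) (Set.Icc (0:ℝ) 1) ↔ 5/768 ≤ c :=
  stmt10_general c
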